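/- arXiv:2406.06283 — 10 statements merged into one kernel-verified Lean document; each statement's English description precedes it below -/
import Mathlib

section
/- There exists a real number γ ≥ 0 such that the linear operator B + γC : V → V is bijective. -/
open RealInnerProductSpace

lemma psd_apply_eq_zero {V : Type*} [NormedAddCommGroup V] [InnerProductSpace ℝ V]
    (C : V →ₗ[ℝ] V) (hC : C.IsSymmetric) (hCpsd : ∀ v : V, 0 ≤ ⟪C v, v⟫)
    {v : V} (h : ⟪C v, v⟫ = 0) : C v = 0 := by
  by_contra hne
  set a : ℝ := ‖C v‖ ^ 2 with ha
  have hapos : 0 < a := pow_pos (norm_pos_iff.mpr hne) 2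
  set b : ℝ := ⟪C (C v), C v⟫ with hb
  have hbnn : 0 ≤ b := hCpsd (C v)
  have key : ∀ t : ℝ, 0 ≤ 2 * t * a + t ^ 2 * b := by
    intro t
    have h0 := hCpsd (v + t • C v)
    have hsym : ⟪C (C v), v⟫ = ⟪C v, C v⟫ := hC (C v) v
    have hsq : ⟪C v, C v⟫ = a := real_inner_self_eq_norm_sq (C v)
    simp only [map_add, map_smul, inner_add_left, inner_add_right, real_inner_smul_left,
      real_inner_smul_right] at h0
    rw [h, hsym, hsq, ← hb] at h0
    nlinarith [h0]
  have hb1 : (0:ℝ) < b + 1 := by linarith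
  set s : ℝ := a / (b + 1) with hs'
  have hspos : 0 < s := div_pos hapos hb1
  have hs : s * (b + 1) = a := by rw [hs', div_mul_cancel₀ _ (ne_of_gt hb1)]
  nlinarith [key (-s), hs, hspos, hapos, mul_pos hspos hspos, mul_pos hspos hapos]

/-- Let `V` be a nontrivial finite-dimensional real inner product space and `B, C : V → V`
symmetric linear operators with `C` positive semidefinite and `ker B ⊓ ker C = ⊥`.
Then there exists `γ ≥ 0` such that `B + γ • C` is bijective. -/
theorem stmt_0 {V : Type*} [NormedAddCommGroup V] [InnerProductSpace ℝ V]
    [FiniteDimensional ℝ V] [Nontrivial V]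
    (B C : V →ₗ[ℝ] V) (hB : B.IsSymmetric) (hC : C.IsSymmetric)
    (hCpsd : ∀ v : V, 0 ≤ ⟪C v, v⟫)
    (hker : LinearMap.ker B ⊓ LinearMap.ker C = ⊥) :
    ∃ γ : ℝ, 0 ≤ γ ∧ Function.Bijective ⇑(B + γ • C) := by
  by_contra hcon
  push_neg at hcon
  set n := Module.finrank ℝ V with hn
  have hv : ∀ i : Fin (n + 1), ∃ w : V, w ≠ 0 ∧ B w + ((i : ℕ) : ℝ) • C w = 0 := by
    intro i
    have hnb := hcon ((i : ℕ) : ℝ) (by positivity)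
    have hni : ¬ Function.Injective ⇑(B + ((i : ℕ) : ℝ) • C) := by
      intro hinj
      exact hnb ⟨hinj, (LinearMap.injective_iff_surjective).mp hinj⟩
    rw [← LinearMap.ker_eq_bot] at hni
    obtain ⟨w, hw, hw0⟩ := Submodule.exists_mem_ne_zero_of_ne_bot hni
    refine ⟨w, hw0, ?_⟩
    simpa [LinearMap.add_apply, LinearMap.smul_apply] using (LinearMap.mem_ker.mp hw)
  choose v hv0 hveq using hv
  have hCoff : ∀ i j : Fin (n + 1), i ≠ j → ⟪C (v i), v j⟫ = 0 := by
    intro i j hij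
    have h1 : ⟪B (v i) + ((i : ℕ) : ℝ) • C (v i), v j⟫ = 0 := by rw [hveq i, inner_zero_left]
    have h2 : ⟪B (v j) + ((j : ℕ) : ℝ) • C (v j), v i⟫ = 0 := by rw [hveq j, inner_zero_left]
    rw [inner_add_left, real_inner_smul_left] at h1 h2
    have hBsym : ⟪B (v i), v j⟫ = ⟪B (v j), v i⟫ := by
      rw [hB (v i) (v j), real_inner_comm]
    have hCsym : ⟪C (v i), v j⟫ = ⟪C (v j), v i⟫ := by
      rw [hC (v i) (v j), real_inner_comm]
    have hne : ((i : ℕ) : ℝ) ≠ ((j : ℕ) : ℝ) := by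
      exact_mod_cast fun h => hij (Fin.ext h)
    have : (((i : ℕ) : ℝ) - ((j : ℕ) : ℝ)) * ⟪C (v i), v j⟫ = 0 := by
      rw [sub_mul]
      rw [hCsym] at h1 ⊢
      linarith [h1, h2, hBsym]
    rcases mul_eq_zero.mp this with h | h
    · exact absurd (sub_eq_zero.mp h) hne
    · exact h
  have hCdiag : ∀ i : Fin (n + 1), ⟪C (v i), v i⟫ ≠ 0 := by
    intro i h0
    have hCv : C (v i) = 0 := psd_apply_eq_zero C hC hCpsd h0
    have hBv : B (v i) = 0 := by
      have := hveq i
      rw [hCv, smul_zero, add_zero] at this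
      exact this
    have : v i ∈ LinearMap.ker B ⊓ LinearMap.ker C := ⟨hBv, hCv⟩
    rw [hker, Submodule.mem_bot] at this
    exact hv0 i this
  have hli : LinearIndependent ℝ v := by
    rw [Fintype.linearIndependent_iff]
    intro g hg j
    have hsum : ⟪C (∑ i, g i • v i), v j⟫ = g j * ⟪C (v j), v j⟫ := by
      rw [map_sum, sum_inner]
      rw [Finset.sum_eq_single j]
      · rw [map_smul, real_inner_smul_left]
      · intro i _ hij
        rw [map_smul, real_inner_smul_left, hCoff i j hij, mul_zero]
      · intro h; exact absurd (Finset.mem_univ j) h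
    rw [hg, map_zero, inner_zero_left] at hsum
    rcases mul_eq_zero.mp hsum.symm with h | h
    · exact h
    · exact absurd h (hCdiag j)
  have hcard := hli.fintype_card_le_finrank
  simp [hn] at hcard
end

section
/- Every complex root of the characteristic polynomial of the real matrix M := (B + γC)⁻¹ C is real (has zero imaginary part). -/
/-!
If `M v = z v` with `v ≠ 0` and `A M = C`, then `C v = z A v`, so `v* C v = z (v* A v)`, where both
quadratic forms are real because `A` and `C` are Hermitian. If `v* A v ≠ 0` this makes `z` real;
otherwise `v* C v = 0`, which for positive semidefinite `C` forces `C v = 0`, hence `z A v = 0`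
and `z = 0` since `A` is invertible.
-/

open RCLike
open scoped ComplexOrder

namespace Matrix

variable {n : Type*} [Fintype n]

theorem exists_mulVec_eq_smul_of_isRoot_charpoly {K : Type*} [Field K] [DecidableEq n]
    {M : Matrix n n K} {z : K} (hz : M.charpoly.IsRoot z) : ∃ v ≠ 0, M *ᵥ v = z • v := by
  rw [← mem_spectrum_iff_isRoot_charpoly, ← spectrum_toLin',
    ← Module.End.hasEigenvalue_iff_mem_spectrum] at hz
  obtain ⟨v, hv⟩ := hz.exists_hasEigenvector
  exact ⟨v, hv.2, hv.apply_eq_smul⟩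

variable {𝕜 : Type*} [RCLike 𝕜]

omit [Fintype n] in
theorem IsSymm.isHermitian_map_ofReal {A : Matrix n n ℝ} (hA : A.IsSymm) :
    (A.map (algebraMap ℝ 𝕜)).IsHermitian :=
  (isHermitian_iff_isSymm.mpr hA).map _ fun r ↦ by simp

theorem PosSemidef.map_ofReal {C : Matrix n n ℝ} (hC : C.PosSemidef) :
    (C.map (algebraMap ℝ 𝕜)).PosSemidef := by
  classical
  obtain ⟨D, rfl⟩ : ∃ D : Matrix n n ℝ, C = star D * D := by
    open scoped MatrixOrder in
    exact CStarAlgebra.nonneg_iff_eq_star_mul_self.mp hC.nonneg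
  rw [Matrix.map_mul, star_eq_conjTranspose, conjTranspose_map _ fun r ↦ by simp]
  exact posSemidef_conjTranspose_mul_self _

theorem im_eq_zero_of_mulVec_eq_smul_mulVec {A C : Matrix n n 𝕜} (hA : A.IsHermitian)
    (hC : C.PosSemidef) {v : n → 𝕜} (hAv : A *ᵥ v ≠ 0) {z : 𝕜} (h : C *ᵥ v = z • A *ᵥ v) :
    im z = 0 := by
  have hquad : star v ⬝ᵥ C *ᵥ v = z * (star v ⬝ᵥ A *ᵥ v) := by
    rw [h, dotProduct_smul, smul_eq_mul]
  by_cases hd : star v ⬝ᵥ A *ᵥ v = 0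
  · have hCv : C *ᵥ v = 0 := (hC.dotProduct_mulVec_zero_iff v).mp (by rw [hquad, hd, mul_zero])
    rw [hCv, eq_comm, smul_eq_zero] at h
    simp [h.resolve_right hAv]
  · have hre : re (star v ⬝ᵥ A *ᵥ v) ≠ 0 := fun h0 ↦ hd (RCLike.ext (by simpa using h0)
      (by simpa using hA.im_star_dotProduct_mulVec_self v))
    have := congrArg im hquad
    rw [hC.isHermitian.im_star_dotProduct_mulVec_self, mul_im,
      hA.im_star_dotProduct_mulVec_self, mul_zero, zero_add, eq_comm, mul_eq_zero] at this
    exact this.resolve_right hre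

theorem im_eq_zero_of_isRoot_charpoly {A C M : Matrix n n 𝕜} [DecidableEq n]
    (hA : A.IsHermitian) (hAu : IsUnit A) (hC : C.PosSemidef) (hM : A * M = C) {z : 𝕜}
    (hz : M.charpoly.IsRoot z) : im z = 0 := by
  obtain ⟨v, hv, hMv⟩ := exists_mulVec_eq_smul_of_isRoot_charpoly hz
  refine im_eq_zero_of_mulVec_eq_smul_mulVec (v := v) hA hC ?_ ?_
  · exact fun h ↦ hv (mulVec_injective_iff_isUnit.mpr hAu (by rwa [mulVec_zero]))
  · rw [← hM, ← mulVec_mulVec, hMv, mulVec_smul]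

theorem im_eq_zero_of_isRoot_map_charpoly_inv_mul {A C : Matrix n n ℝ} [DecidableEq n]
    (hA : A.IsSymm) (hAu : IsUnit A) (hC : C.PosSemidef) {z : 𝕜}
    (hz : ((A⁻¹ * C).charpoly.map (algebraMap ℝ 𝕜)).IsRoot z) : im z = 0 := by
  rw [← charpoly_map] at hz
  refine im_eq_zero_of_isRoot_charpoly hA.isHermitian_map_ofReal
    (hAu.map (algebraMap ℝ 𝕜).mapMatrix) hC.map_ofReal ?_ hz
  rw [← Matrix.map_mul, ← mul_assoc, mul_nonsing_inv _ ((isUnit_iff_isUnit_det A).mp hAu), one_mul]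

end Matrix

theorem stmt_1_general (n : ℕ) (B C : Matrix (Fin n) (Fin n) ℝ)
    (hB : B.IsSymm) (hC : C.PosSemidef) (γ : ℝ)
    (hinv : IsUnit (B + γ • C)) :
    ∀ z : ℂ, (((((B + γ • C)⁻¹ * C)).charpoly.map (algebraMap ℝ ℂ)).IsRoot z) → z.im = 0 :=
  fun _ ↦ Matrix.im_eq_zero_of_isRoot_map_charpoly_inv_mul
    (hB.add ((Matrix.isHermitian_iff_isSymm.mp hC.isHermitian).smul γ)) hinv hC

/-- Let `n > 0`, let `B` and `C` be real symmetric `n×n` matrices with `C` positive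
semidefinite, and let `γ : ℝ` be such that `B + γ • C` is invertible; set
`M := (B + γ • C)⁻¹ * C`.  Then every complex root of the characteristic polynomial
of `M` is real (has zero imaginary part). -/
theorem stmt_1 (n : ℕ) (hn : 0 < n) (B C : Matrix (Fin n) (Fin n) ℝ)
    (hB : B.IsSymm) (hC : C.PosSemidef) (γ : ℝ)
    (hinv : IsUnit (B + γ • C)) :
    ∀ z : ℂ, (((((B + γ • C)⁻¹ * C)).charpoly.map (algebraMap ℝ ℂ)).IsRoot z) → z.im = 0 :=
  stmt_1_general n B C hB hC γ hinv
end

section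
/- If v ∈ V, v ≠ 0, μ ∈ ℝ, μ ≠ 0 and U v = μ v, then ⟨C v, v⟩ > 0 and μ · ⟨(B + γC) v, v⟩ = ⟨C v, v⟩; in particular ⟨(B + γC) v, v⟩ ≠ 0. -/
open RealInnerProductSpace

lemma psd_inner_zero {V : Type*} [NormedAddCommGroup V] [InnerProductSpace ℝ V]
    (C : V →ₗ[ℝ] V) (hC : C.IsSymmetric) (hCpsd : ∀ v : V, 0 ≤ ⟪C v, v⟫)
    (v : V) (h : ⟪C v, v⟫ = 0) : C v = 0 := by
  have hb' : ⟪C v, C v⟫ = ‖C v‖ ^ 2 := real_inner_self_eq_norm_sq _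
  have key : ∀ t : ℝ, 0 ≤ ⟪C (C v), C v⟫ * t ^ 2 + 2 * ⟪C v, C v⟫ * t := by
    intro t
    have h0 := hCpsd (v + t • C v)
    have expand : ⟪C (v + t • C v), v + t • C v⟫
        = ⟪C (C v), C v⟫ * t ^ 2 + 2 * ⟪C v, C v⟫ * t := by
      simp only [map_add, map_smul, inner_add_left, inner_add_right,
        real_inner_smul_left, real_inner_smul_right]
      rw [h, real_inner_comm (C v) (C (C v)), hC (C v) v]
      ring
    rw [expand] at h0
    exact h0
  by_contra hne
  set a : ℝ := ⟪C (C v), C v⟫ with ha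
  set b : ℝ := ⟪C v, C v⟫ with hb
  have ha0 : 0 ≤ a := hCpsd (C v)
  have hbpos : 0 < b := by
    rw [hb']
    have : ‖C v‖ ≠ 0 := norm_ne_zero_iff.mpr hne
    positivity
  have hkey := key (-b / (a + 1))
  have hne1 : (a + 1) ≠ 0 := by positivity
  have h2 : 0 ≤ (a * (-b / (a + 1)) ^ 2 + 2 * b * (-b / (a + 1))) * (a + 1) ^ 2 :=
    mul_nonneg hkey (sq_nonneg _)
  have h3 : (a * (-b / (a + 1)) ^ 2 + 2 * b * (-b / (a + 1))) * (a + 1) ^ 2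
      = a * b ^ 2 - 2 * b ^ 2 * (a + 1) := by
    field_simp
    ring
  rw [h3] at h2
  nlinarith [mul_pos hbpos hbpos, mul_nonneg ha0 (mul_pos hbpos hbpos).le]

/-- Let `V` be a finite-dimensional real inner product space, `B, C` symmetric linear
operators with `C` positive semidefinite, `γ : ℝ` such that `B + γ • C` is invertible,
and `U := (B + γ • C)⁻¹ ∘ C` (characterized by `(B + γ • C) ∘ U = C`).
If `v ≠ 0`, `μ ≠ 0` and `U v = μ • v`, then `⟪C v, v⟫ > 0`,
`μ * ⟪(B + γ • C) v, v⟫ = ⟪C v, v⟫`, and in particular `⟪(B + γ • C) v, v⟫ ≠ 0`. -/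
theorem stmt_2 {V : Type*} [NormedAddCommGroup V] [InnerProductSpace ℝ V]
    [FiniteDimensional ℝ V]
    (B C U : V →ₗ[ℝ] V) (hB : B.IsSymmetric) (hC : C.IsSymmetric)
    (hCpsd : ∀ v : V, 0 ≤ ⟪C v, v⟫) (γ : ℝ)
    (hinv : Function.Bijective ⇑(B + γ • C))
    (hU : (B + γ • C) ∘ₗ U = C)
    (v : V) (hv : v ≠ 0) (μ : ℝ) (hμ : μ ≠ 0) (hev : U v = μ • v) :
    0 < ⟪C v, v⟫ ∧ μ * ⟪(B + γ • C) v, v⟫ = ⟪C v, v⟫ ∧ ⟪(B + γ • C) v, v⟫ ≠ 0 := by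
  have h1 : (B + γ • C) (μ • v) = C v := by
    have := congrArg (fun f : V →ₗ[ℝ] V => f v) hU
    simpa [LinearMap.comp_apply, hev] using this
  have h2 : μ * ⟪(B + γ • C) v, v⟫ = ⟪C v, v⟫ := by
    rw [← h1, map_smul, real_inner_smul_left]
  have hpos : 0 < ⟪C v, v⟫ := by
    rcases lt_or_eq_of_le (hCpsd v) with h | h
    · exact h
    · exfalso
      have hCv : C v = 0 := psd_inner_zero C hC hCpsd v h.symm
      have : (B + γ • C) (μ • v) = (B + γ • C) 0 := by
        rw [h1, hCv, map_zero]
      have := hinv.injective this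
      exact hv (by simpa [smul_eq_zero, hμ] using this)
  refine ⟨hpos, h2, fun h0 => ?_⟩
  rw [h0, mul_zero] at h2
  exact absurd h2.symm (ne_of_gt hpos)
end

section
/- Eigenvectors of U corresponding to distinct eigenvalues are orthogonal with respect to the forms induced by B + γC, C, and B: if U v₁ = μ₁ v₁, U v₂ = μ₂ v₂ with μ₁, μ₂ ∈ ℝ and μ₁ ≠ μ₂, then ⟨(B + γC) v₁, v₂⟩ = 0, ⟨C v₁, v₂⟩ = 0 and ⟨B v₁, v₂⟩ = 0. -/
open RealInnerProductSpace

/-- Setup as before, with `U := (B + γ • C)⁻¹ ∘ C`.  Eigenvectors of `U` corresponding to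
distinct eigenvalues are orthogonal with respect to the forms induced by `B + γC`, `C`
and `B`. -/
theorem stmt_4 {V : Type*} [NormedAddCommGroup V] [InnerProductSpace ℝ V]
    [FiniteDimensional ℝ V]
    (B C U : V →ₗ[ℝ] V) (hB : B.IsSymmetric) (hC : C.IsSymmetric)
    (hCpsd : ∀ v : V, 0 ≤ ⟪C v, v⟫) (γ : ℝ)
    (hinv : Function.Bijective ⇑(B + γ • C))
    (hU : (B + γ • C) ∘ₗ U = C)
    (v₁ v₂ : V) (μ₁ μ₂ : ℝ) (hμ : μ₁ ≠ μ₂)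
    (hev₁ : U v₁ = μ₁ • v₁) (hev₂ : U v₂ = μ₂ • v₂) :
    ⟪(B + γ • C) v₁, v₂⟫ = 0 ∧ ⟪C v₁, v₂⟫ = 0 ∧ ⟪B v₁, v₂⟫ = 0 := by
  set A := B + γ • C with hA
  have hAs : A.IsSymmetric := by
    intro x y
    simp only [hA, LinearMap.add_apply, LinearMap.smul_apply, inner_add_left, inner_add_right,
      inner_smul_left, inner_smul_right, hB x y, hC x y, conj_trivial]

  have h1 : μ₁ • A v₁ = C v₁ := by
    have := LinearMap.congr_fun hU v₁
    simpa [hev₁, map_smul] using this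
  have h2 : μ₂ • A v₂ = C v₂ := by
    have := LinearMap.congr_fun hU v₂
    simpa [hev₂, map_smul] using this
  have key : (μ₁ - μ₂) * ⟪A v₁, v₂⟫ = 0 := by
    have e1 : ⟪C v₁, v₂⟫ = μ₁ * ⟪A v₁, v₂⟫ := by
      rw [← h1, inner_smul_left]; simp
    have e2 : ⟪C v₁, v₂⟫ = μ₂ * ⟪A v₁, v₂⟫ := by
      rw [hC v₁ v₂, ← h2, inner_smul_right, ← hAs v₁ v₂]
    nlinarith [e1, e2]
  have hA0 : ⟪A v₁, v₂⟫ = 0 := by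
    rcases mul_eq_zero.mp key with h | h
    · exact absurd (sub_eq_zero.mp h) hμ
    · exact h
  have hC0 : ⟪C v₁, v₂⟫ = 0 := by
    rw [← h1, inner_smul_left]; simp [hA0]
  refine ⟨hA0, hC0, ?_⟩
  have : ⟪A v₁, v₂⟫ = ⟪B v₁, v₂⟫ + γ * ⟪C v₁, v₂⟫ := by
    simp [hA, inner_add_left, inner_smul_left]
  rw [hA0, hC0] at this
  linarith
end

section
/- Generalized eigenvectors of U at the eigenvalue 0 are orthogonal to eigenvectors of nonzero eigenvalues: if v ∈ V satisfies Uʲ v = 0 for some natural number j, and w ∈ V satisfies U w = μ w with μ ∈ ℝ, μ ≠ 0, then ⟨(B + γC) v, w⟩ = 0 and ⟨C v, w⟩ = 0. -/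
open RealInnerProductSpace

/-- Setup as before, with `U := (B + γ • C)⁻¹ ∘ C`.  Generalized eigenvectors of `U` at
the eigenvalue `0` are orthogonal to eigenvectors of nonzero eigenvalues, with respect to
the forms induced by `B + γC` and `C`. -/
theorem stmt_5 {V : Type*} [NormedAddCommGroup V] [InnerProductSpace ℝ V]
    [FiniteDimensional ℝ V]
    (B C U : V →ₗ[ℝ] V) (hB : B.IsSymmetric) (hC : C.IsSymmetric)
    (hCpsd : ∀ v : V, 0 ≤ ⟪C v, v⟫) (γ : ℝ)
    (hinv : Function.Bijective ⇑(B + γ • C))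
    (hU : (B + γ • C) ∘ₗ U = C)
    (v : V) (j : ℕ) (hv : (U ^ j) v = 0)
    (w : V) (μ : ℝ) (hμ : μ ≠ 0) (hw : U w = μ • w) :
    ⟪(B + γ • C) v, w⟫ = 0 ∧ ⟪C v, w⟫ = 0 := by
  set A := B + γ • C with hA_def
  have hA : A.IsSymmetric := by
    intro x y
    simp only [hA_def, LinearMap.add_apply, LinearMap.smul_apply, inner_add_left,
      inner_add_right, inner_smul_left, inner_smul_right, hB x y, hC x y]
    simp [starRingEnd_apply]
  have hAU : ∀ x, A (U x) = C x := fun x => by rw [← LinearMap.comp_apply, hU]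
  -- key step: ⟪A (U x), w⟫ = μ * ⟪A x, w⟫
  have key : ∀ x : V, ⟪A (U x), w⟫ = μ * ⟪A x, w⟫ := by
    intro x
    calc ⟪A (U x), w⟫ = ⟪C x, w⟫ := by rw [hAU]
      _ = ⟪x, C w⟫ := hC x w
      _ = ⟪x, A (U w)⟫ := by rw [hAU]
      _ = ⟪A x, U w⟫ := (hA x (U w)).symm
      _ = μ * ⟪A x, w⟫ := by rw [hw, real_inner_smul_right]
  have iter : ∀ (k : ℕ) (x : V), ⟪A ((U ^ k) x), w⟫ = μ ^ k * ⟪A x, w⟫ := by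
    intro k
    induction k with
    | zero => intro x; simp
    | succ n ih =>
        intro x
        have : (U ^ (n + 1)) x = (U ^ n) (U x) := by
          rw [pow_succ]
          rfl
        rw [this, ih (U x), key x, pow_succ]
        ring
  have h1 : ⟪A v, w⟫ = 0 := by
    have h0 : ⟪A ((U ^ j) v), w⟫ = 0 := by rw [hv]; simp
    rw [iter j v] at h0
    have := pow_ne_zero j hμ
    exact (mul_eq_zero.mp h0).resolve_left this
  refine ⟨h1, ?_⟩
  calc ⟪C v, w⟫ = ⟪A (U v), w⟫ := by rw [hAU]
    _ = μ * ⟪A v, w⟫ := key v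
    _ = 0 := by rw [h1, mul_zero]
end

section
/- The space V decomposes into the maximal generalized eigenspace of U at 0 together with the eigenspaces of U at nonzero eigenvalues: the supremum of the maximal generalized eigenspace of U at the eigenvalue 0 and of the eigenspaces of U at all nonzero real eigenvalues μ equals V. In particular every v ∈ V can be written as v = v₀ + Σᵢ αᵢ pᵢ, where Uʲ v₀ = 0 for some j and each pᵢ is an eigenvector of U corresponding to a nonzero real eigenvalue. -/
open RealInnerProductSpace

/-- A symmetric positive semidefinite operator on a finite-dimensional real inner product
space has a symmetric square root. -/
lemma exists_symm_sqrt {V : Type*} [NormedAddCommGroup V] [InnerProductSpace ℝ V]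
    [FiniteDimensional ℝ V] (C : V →ₗ[ℝ] V) (hC : C.IsSymmetric)
    (hCpsd : ∀ v : V, 0 ≤ ⟪C v, v⟫) :
    ∃ S : V →ₗ[ℝ] V, S.IsSymmetric ∧ S ∘ₗ S = C := by
  set n := Module.finrank ℝ V with hn
  let b : OrthonormalBasis (Fin n) ℝ V := hC.eigenvectorBasis rfl
  let lam : Fin n → ℝ := hC.eigenvalues rfl
  have hb : ∀ i, C (b i) = lam i • b i := fun i => hC.apply_eigenvectorBasis rfl i
  have horth : Orthonormal ℝ b := b.orthonormal
  have hlam : ∀ i, 0 ≤ lam i := by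
    intro i
    have h := hCpsd (b i)
    rw [hb i, real_inner_smul_left] at h
    have h1 : ⟪b i, b i⟫ = 1 := by
      rw [real_inner_self_eq_norm_mul_norm, horth.1 i]; norm_num
    rw [h1, mul_one] at h
    exact h
  let S : V →ₗ[ℝ] V := b.toBasis.constr ℝ (fun i => Real.sqrt (lam i) • b i)
  have hSb : ∀ i, S (b i) = Real.sqrt (lam i) • b i := by
    intro i
    simpa [S] using b.toBasis.constr_basis ℝ (fun i => Real.sqrt (lam i) • b i) i
  have key : ∀ i j, ⟪S (b i), b j⟫ = ⟪b i, S (b j)⟫ := by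
    intro i j
    rw [hSb i, hSb j, real_inner_smul_left, real_inner_smul_right]
    rcases eq_or_ne i j with h | h
    · subst h; ring
    · rw [horth.2 h]
      ring
  refine ⟨S, ?_, ?_⟩
  · intro x y
    have hx := b.toBasis.sum_repr x
    have hy := b.toBasis.sum_repr y
    rw [← hx, ← hy]
    simp only [map_sum, map_smul, sum_inner, inner_sum, real_inner_smul_left,
      real_inner_smul_right, OrthonormalBasis.coe_toBasis]
    refine Finset.sum_congr rfl fun i _ => Finset.sum_congr rfl fun j _ => ?_
    rw [key j i]
  · apply b.toBasis.ext
    intro i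
    simp only [OrthonormalBasis.coe_toBasis]
    rw [LinearMap.comp_apply, hSb i, map_smul, hSb i, smul_smul,
      Real.mul_self_sqrt (hlam i), hb i]

/-- Setup as before, with `U := (B + γ • C)⁻¹ ∘ C`.  The space `V` decomposes into the
maximal generalized eigenspace of `U` at `0` together with the eigenspaces of `U` at
nonzero eigenvalues: their supremum is all of `V`. -/
theorem stmt_6 {V : Type*} [NormedAddCommGroup V] [InnerProductSpace ℝ V]
    [FiniteDimensional ℝ V]
    (B C U : V →ₗ[ℝ] V) (hB : B.IsSymmetric) (hC : C.IsSymmetric)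
    (hCpsd : ∀ v : V, 0 ≤ ⟪C v, v⟫) (γ : ℝ)
    (hinv : Function.Bijective ⇑(B + γ • C))
    (hU : (B + γ • C) ∘ₗ U = C) :
    (Module.End.maxGenEigenspace (U : Module.End ℝ V) 0) ⊔
      (⨆ μ : ℝ, ⨆ _ : μ ≠ 0, Module.End.eigenspace (U : Module.End ℝ V) μ) = ⊤ := by
  obtain ⟨S, hS, hSS⟩ := exists_symm_sqrt C hC hCpsd
  set A : V →ₗ[ℝ] V := B + γ • C with hA_def
  have hA : A.IsSymmetric := by
    intro x y
    simp only [hA_def, LinearMap.add_apply, LinearMap.smul_apply, inner_add_left,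
      inner_add_right, real_inner_smul_left, real_inner_smul_right, hB x y, hC x y]
  let e : V ≃ₗ[ℝ] V := LinearEquiv.ofBijective A hinv
  let A' : V →ₗ[ℝ] V := e.symm
  have hA'A : ∀ v, A' (A v) = v := fun v => e.symm_apply_apply v
  have hAA' : ∀ v, A (A' v) = v := fun v => e.apply_symm_apply v
  have hA' : ∀ x y, ⟪A' x, y⟫ = ⟪x, A' y⟫ := by
    intro x y
    conv_lhs => rw [← hAA' y]
    rw [← hA (A' x) (A' y), hAA']
  have hUv : ∀ v, U v = A' (C v) := by
    intro v
    have h1 : A (U v) = C v := by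
      have := LinearMap.ext_iff.mp hU v
      simpa [LinearMap.comp_apply] using this
    rw [← h1, hA'A]
  have hCv : ∀ v, C v = S (S v) := by
    intro v
    rw [← hSS]; rfl
  set T : V →ₗ[ℝ] V := S ∘ₗ A' ∘ₗ S with hT_def
  have hT : T.IsSymmetric := by
    intro x y
    simp only [hT_def, LinearMap.comp_apply]
    rw [hS, hA', hS]
  have hTop : (⨆ μ : ℝ, Module.End.eigenspace T μ) = ⊤ :=
    Submodule.orthogonal_eq_bot_iff.mp hT.orthogonalComplement_iSup_eigenspaces_eq_bot
  set N := ⨆ μ : ℝ, ⨆ _ : μ ≠ 0, Module.End.eigenspace (U : Module.End ℝ V) μ with hN_def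
  set φ : V →ₗ[ℝ] V := A' ∘ₗ S with hφ_def
  have hUφ : ∀ w, U (φ w) = φ (T w) := by
    intro w
    simp only [hφ_def, hT_def, LinearMap.comp_apply]
    rw [hUv, hCv]
  have hU2 : ∀ v, U (U v) = φ (T (S v)) := by
    intro v
    have : U v = φ (S v) := by
      rw [hUv, hCv]; rfl
    rw [this, hUφ (S v)]
  have key : ∀ w, φ (T w) ∈ Submodule.map (U ∘ₗ U) N := by
    have hle : (⨆ μ : ℝ, Module.End.eigenspace T μ) ≤
        Submodule.comap (φ ∘ₗ T) (Submodule.map (U ∘ₗ U) N) := by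
      refine iSup_le fun μ => ?_
      intro w hw
      rw [Module.End.mem_eigenspace_iff] at hw
      simp only [Submodule.mem_comap, LinearMap.comp_apply]
      rcases eq_or_ne μ 0 with h0 | h0
      · subst h0
        rw [hw, zero_smul, map_zero]
        exact Submodule.zero_mem _
      · have hUφw : U (φ w) = μ • φ w := by
          rw [hUφ w, hw, map_smul]
        have hφw : φ w ∈ Module.End.eigenspace (U : Module.End ℝ V) μ :=
          Module.End.mem_eigenspace_iff.mpr hUφw
        refine ⟨μ⁻¹ • φ w, ?_, ?_⟩
        · refine Submodule.smul_mem _ _ ?_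
          exact Submodule.mem_iSup_of_mem μ (Submodule.mem_iSup_of_mem h0 hφw)
        · have h2 : U (U (φ w)) = (μ * μ) • φ w := by
            rw [hUφw, map_smul, hUφw, smul_smul]
          rw [LinearMap.comp_apply, map_smul, map_smul, h2, hw, map_smul, smul_smul]
          congr 1
          field_simp
    intro w
    have hw : w ∈ (⊤ : Submodule ℝ V) := trivial
    rw [← hTop] at hw
    simpa [LinearMap.comp_apply] using hle hw
  rw [eq_top_iff]
  intro v _
  obtain ⟨p, hpN, hp⟩ := key (S v)
  have hp' : U (U p) = U (U v) := by
    rw [hU2 v]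
    simpa [LinearMap.comp_apply] using hp
  have hv0 : v - p ∈ Module.End.maxGenEigenspace (U : Module.End ℝ V) 0 := by
    rw [Module.End.mem_maxGenEigenspace]
    refine ⟨2, ?_⟩
    simp only [zero_smul, sub_zero, pow_two, Module.End.mul_apply, map_sub]
    rw [hp', sub_self]
  have hv : v = (v - p) + p := by abel
  rw [hv]
  exact Submodule.add_mem_sup hv0 hpN
end

section
/- If w satisfies the Friedrichs-type bound ‖w‖ ≤ (H/√2)·‖w‖_{1,k}, the local-solve identity b(w, w) = b(u, w), and H·k ≤ √2/2, then ‖w‖_{1,k} ≤ 2‖u‖_{1,k}. -/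
open RealInnerProductSpace

lemma bilin_cs {V : Type*} [AddCommGroup V] [Module ℝ V]
    (a : V →ₗ[ℝ] V →ₗ[ℝ] ℝ)
    (ha_symm : ∀ x y : V, a x y = a y x) (ha_psd : ∀ x : V, 0 ≤ a x x)
    (u w : V) : (a u w) ^ 2 ≤ a u u * a w w := by
  have h : ∀ t : ℝ, 0 ≤ (a w w) * (t * t) + (2 * a u w) * t + a u u := by
    intro t
    have := ha_psd (u + t • w)
    simp only [map_add, map_smul, LinearMap.add_apply, LinearMap.smul_apply,
      smul_eq_mul] at this
    rw [ha_symm w u] at this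
    nlinarith
  have := discrim_le_zero h
  rw [discrim] at this
  nlinarith

/-- Let `a` be a symmetric positive semidefinite bilinear form on a real inner product
space, `k > 0`, `H > 0`, with `b(u,v) := a(u,v) - k²(u,v)` and
`‖u‖_{1,k} := √(a(u,u) + k²‖u‖²)`.  If `w` satisfies the Friedrichs-type bound
`‖w‖ ≤ (H/√2)·‖w‖_{1,k}`, the local-solve identity `b(w,w) = b(u,w)`, and
`H·k ≤ √2/2`, then `‖w‖_{1,k} ≤ 2‖u‖_{1,k}`. -/
theorem stmt_11 {V : Type*} [NormedAddCommGroup V] [InnerProductSpace ℝ V]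
    (a : V →ₗ[ℝ] V →ₗ[ℝ] ℝ)
    (ha_symm : ∀ x y : V, a x y = a y x) (ha_psd : ∀ x : V, 0 ≤ a x x)
    (k H : ℝ) (hk : 0 < k) (hH : 0 < H)
    (u w : V)
    (hFriedrichs : ‖w‖ ≤ (H / Real.sqrt 2) * Real.sqrt (a w w + k ^ 2 * ‖w‖ ^ 2))
    (hsolve : a w w - k ^ 2 * ⟪w, w⟫ = a u w - k ^ 2 * ⟪u, w⟫)
    (hHk : H * k ≤ Real.sqrt 2 / 2) :
    Real.sqrt (a w w + k ^ 2 * ‖w‖ ^ 2) ≤ 2 * Real.sqrt (a u u + k ^ 2 * ‖u‖ ^ 2) := by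
  set Nw := Real.sqrt (a w w + k ^ 2 * ‖w‖ ^ 2) with hNw
  set Nu := Real.sqrt (a u u + k ^ 2 * ‖u‖ ^ 2) with hNu
  have hwnn : (0:ℝ) ≤ a w w + k ^ 2 * ‖w‖ ^ 2 := by
    have := ha_psd w; positivity
  have hunn : (0:ℝ) ≤ a u u + k ^ 2 * ‖u‖ ^ 2 := by
    have := ha_psd u; positivity
  have hNwnn : 0 ≤ Nw := Real.sqrt_nonneg _
  have hNunn : 0 ≤ Nu := Real.sqrt_nonneg _
  have hNw2 : Nw ^ 2 = a w w + k ^ 2 * ‖w‖ ^ 2 := Real.sq_sqrt hwnn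
  have hNu2 : Nu ^ 2 = a u u + k ^ 2 * ‖u‖ ^ 2 := Real.sq_sqrt hunn
  have hcs : (a u w) ^ 2 ≤ a u u * a w w := bilin_cs a ha_symm ha_psd u w
  have hiw : ⟪w, w⟫ = ‖w‖ ^ 2 := real_inner_self_eq_norm_sq w
  have hiuw : |⟪u, w⟫| ≤ ‖u‖ * ‖w‖ := abs_real_inner_le_norm u w
  -- b(u,w) ≤ Nu * Nw
  have hb : a u w - k ^ 2 * ⟪u, w⟫ ≤ Nu * Nw := by
    have h1 : a u w ≤ Real.sqrt (a u u) * Real.sqrt (a w w) := by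
      rw [← Real.sqrt_mul (ha_psd u)]
      calc a u w ≤ |a u w| := le_abs_self _
        _ = Real.sqrt ((a u w) ^ 2) := (Real.sqrt_sq_eq_abs _).symm
        _ ≤ _ := Real.sqrt_le_sqrt hcs
    have hp2 : Real.sqrt (a u u) ^ 2 = a u u := Real.sq_sqrt (ha_psd u)
    have hq2 : Real.sqrt (a w w) ^ 2 = a w w := Real.sq_sqrt (ha_psd w)
    have h2 : Real.sqrt (a u u) * Real.sqrt (a w w) + k ^ 2 * (‖u‖ * ‖w‖) ≤ Nu * Nw := by
      nlinarith [sq_nonneg (k * (Real.sqrt (a u u) * ‖w‖ - Real.sqrt (a w w) * ‖u‖)),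
        mul_nonneg hNunn hNwnn, norm_nonneg u, norm_nonneg w,
        Real.sqrt_nonneg (a u u), Real.sqrt_nonneg (a w w), sq_nonneg k,
        sq_nonneg (Nu * Nw + (Real.sqrt (a u u) * Real.sqrt (a w w) + k ^ 2 * (‖u‖ * ‖w‖)))]
    have h3 : k ^ 2 * (-⟪u, w⟫) ≤ k ^ 2 * (‖u‖ * ‖w‖) :=
      mul_le_mul_of_nonneg_left (by linarith [neg_abs_le ⟪u, w⟫]) (sq_nonneg k)
    linarith
  -- ‖w‖² ≤ (H²/2) Nw²
  have hs2 : Real.sqrt 2 ^ 2 = 2 := Real.sq_sqrt (by norm_num)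
  have hwle : ‖w‖ ^ 2 ≤ H ^ 2 / 2 * Nw ^ 2 := by
    have hsq : ‖w‖ ^ 2 ≤ (H / Real.sqrt 2 * Nw) ^ 2 :=
      pow_le_pow_left₀ (norm_nonneg w) hFriedrichs 2
    have : (H / Real.sqrt 2 * Nw) ^ 2 = H ^ 2 / 2 * Nw ^ 2 := by
      rw [mul_pow, div_pow, hs2]
    linarith
  have hHk2 : H ^ 2 * k ^ 2 ≤ 1 / 2 := by
    nlinarith [mul_pos hH hk]
  have key : Nw ^ 2 ≤ 2 * (Nu * Nw) := by
    have : Nw ^ 2 = (a u w - k ^ 2 * ⟪u, w⟫) + 2 * k ^ 2 * ‖w‖ ^ 2 := by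
      rw [hNw2]; rw [hiw] at hsolve; linarith
    have h5 : 2 * k ^ 2 * ‖w‖ ^ 2 ≤ 2 * k ^ 2 * (H ^ 2 / 2 * Nw ^ 2) :=
      mul_le_mul_of_nonneg_left hwle (by positivity)
    have h6 : H ^ 2 * k ^ 2 * Nw ^ 2 ≤ 1 / 2 * Nw ^ 2 :=
      mul_le_mul_of_nonneg_right hHk2 (sq_nonneg Nw)
    have h7 : 2 * k ^ 2 * (H ^ 2 / 2 * Nw ^ 2) = H ^ 2 * k ^ 2 * Nw ^ 2 := by ring
    linarith [hb]
  rcases eq_or_lt_of_le hNwnn with h0 | h0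
  · rw [← h0]; positivity
  · calc Nw = Nw ^ 2 / Nw := by rw [sq, mul_div_assoc, div_self h0.ne', mul_one]
      _ ≤ 2 * (Nu * Nw) / Nw := by gcongr
      _ = 2 * Nu := by field_simp
end

section
/- If u ∈ V admits a decomposition u = Σᵢ zᵢ with zᵢ ∈ Wᵢ for each i and Σᵢ ‖zᵢ‖² ≤ C₀·‖u‖², then ‖u‖² ≤ C₀·⟨Σᵢ Pᵢ u, u⟩. -/
open RealInnerProductSpace

/-! If `u = ∑ zᵢ` with `zᵢ ∈ Wᵢ`, then `⟪zᵢ, u⟫ = ⟪zᵢ, Pᵢ u⟫`, so Cauchy–Schwarz twice gives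
`‖u‖⁴ ≤ (∑ ‖zᵢ‖²) (∑ ‖Pᵢ u‖²)`, and `∑ ‖Pᵢ u‖² = ⟪∑ Pᵢ u, u⟫` because each `Pᵢ` is a symmetric
idempotent. Dividing by `‖u‖²` after using the stability bound gives the claim. -/

namespace Submodule

variable {V : Type*} [NormedAddCommGroup V] [InnerProductSpace ℝ V]

theorem real_inner_starProjection_self (K : Submodule ℝ V) [K.HasOrthogonalProjection] (u : V) :
    ⟪K.starProjection u, u⟫ = ‖K.starProjection u‖ ^ 2 := by
  simpa using K.re_inner_starProjection_eq_normSq u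

theorem abs_real_inner_le_norm_mul_norm_starProjection {K : Submodule ℝ V}
    [K.HasOrthogonalProjection] {z : V} (hz : z ∈ K) (u : V) :
    |⟪z, u⟫| ≤ ‖z‖ * ‖K.starProjection u‖ := by
  rw [← K.starProjection_eq_self_iff.mpr hz, inner_starProjection_left_eq_right,
    K.starProjection_eq_self_iff.mpr hz]
  exact abs_real_inner_le_norm _ _

variable {ι : Type*} (s : Finset ι) (W : ι → Submodule ℝ V) [∀ i, (W i).HasOrthogonalProjection]

theorem real_inner_sum_starProjection_self (u : V) :
    ⟪∑ i ∈ s, (W i).starProjection u, u⟫ = ∑ i ∈ s, ‖(W i).starProjection u‖ ^ 2 := by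
  simp only [sum_inner, real_inner_starProjection_self]

theorem sq_real_inner_sum_le_sum_norm_sq_mul_sum_norm_sq_starProjection {z : ι → V}
    (hz : ∀ i ∈ s, z i ∈ W i) (u : V) :
    ⟪∑ i ∈ s, z i, u⟫ ^ 2 ≤ (∑ i ∈ s, ‖z i‖ ^ 2) * ∑ i ∈ s, ‖(W i).starProjection u‖ ^ 2 := by
  have h : |⟪∑ i ∈ s, z i, u⟫| ≤ ∑ i ∈ s, ‖z i‖ * ‖(W i).starProjection u‖ := by
    rw [sum_inner]
    exact (Finset.abs_sum_le_sum_abs _ _).trans <| Finset.sum_le_sum fun i hi ↦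
      abs_real_inner_le_norm_mul_norm_starProjection (hz i hi) u
  calc ⟪∑ i ∈ s, z i, u⟫ ^ 2 = |⟪∑ i ∈ s, z i, u⟫| ^ 2 := (sq_abs _).symm
    _ ≤ (∑ i ∈ s, ‖z i‖ * ‖(W i).starProjection u‖) ^ 2 := pow_le_pow_left₀ (abs_nonneg _) h 2
    _ ≤ _ := Finset.sum_mul_sq_le_sq_mul_sq _ _ _

end Submodule

theorem stmt_13_general {V : Type*} [NormedAddCommGroup V] [InnerProductSpace ℝ V]
    [FiniteDimensional ℝ V]
    {ι : Type*} [Fintype ι] (W : ι → Submodule ℝ V)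
    (C₀ : ℝ)
    (u : V) (z : ι → V) (hz : ∀ i, z i ∈ W i) (hdecomp : u = ∑ i, z i)
    (hstable : ∑ i, ‖z i‖ ^ 2 ≤ C₀ * ‖u‖ ^ 2) :
    ‖u‖ ^ 2 ≤ C₀ * ⟪∑ i, (((W i).orthogonalProjection u : V)), u⟫ := by
  simp only [← Submodule.starProjection_apply, Submodule.real_inner_sum_starProjection_self]
  have key := Submodule.sq_real_inner_sum_le_sum_norm_sq_mul_sum_norm_sq_starProjection
    Finset.univ W (fun i _ ↦ hz i) u
  rw [← hdecomp, real_inner_self_eq_norm_sq] at key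
  rcases eq_or_ne u 0 with rfl | hu
  · simp
  have hu2 : 0 < ‖u‖ ^ 2 := by positivity
  refine le_of_mul_le_mul_left ?_ hu2
  calc ‖u‖ ^ 2 * ‖u‖ ^ 2 = (‖u‖ ^ 2) ^ 2 := (sq _).symm
    _ ≤ (∑ i, ‖z i‖ ^ 2) * ∑ i, ‖(W i).starProjection u‖ ^ 2 := key
    _ ≤ C₀ * ‖u‖ ^ 2 * ∑ i, ‖(W i).starProjection u‖ ^ 2 :=
      mul_le_mul_of_nonneg_right hstable (by positivity)
    _ = ‖u‖ ^ 2 * (C₀ * ∑ i, ‖(W i).starProjection u‖ ^ 2) := by ring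

/-- Let `V` be a finite-dimensional real inner product space, `(Wᵢ)` a finite family of
subspaces with orthogonal projections `Pᵢ`, and `C₀ > 0`.  If `u = Σᵢ zᵢ` with
`zᵢ ∈ Wᵢ` and `Σᵢ ‖zᵢ‖² ≤ C₀·‖u‖²`, then `‖u‖² ≤ C₀·⟨Σᵢ Pᵢ u, u⟩`. -/
theorem stmt_13 {V : Type*} [NormedAddCommGroup V] [InnerProductSpace ℝ V]
    [FiniteDimensional ℝ V]
    {ι : Type*} [Fintype ι] (W : ι → Submodule ℝ V)
    (C₀ : ℝ) (hC₀ : 0 < C₀)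
    (u : V) (z : ι → V) (hz : ∀ i, z i ∈ W i) (hdecomp : u = ∑ i, z i)
    (hstable : ∑ i, ‖z i‖ ^ 2 ≤ C₀ * ‖u‖ ^ 2) :
    ‖u‖ ^ 2 ≤ C₀ * ⟪∑ i, (((W i).orthogonalProjection u : V)), u⟫ :=
  stmt_13_general W C₀ u z hz hdecomp hstable
end

section
/- Suppose the subspaces have finite overlap with constant Λ > 0, i.e., ‖Σᵢ wᵢ‖² ≤ Λ²·Σᵢ ‖wᵢ‖² for every choice of vectors wᵢ ∈ Wᵢ. Then for every u ∈ V one has ‖Σᵢ Pᵢ u‖ ≤ Λ²·‖u‖ and Σᵢ ‖Pᵢ u‖² ≤ Λ²·‖u‖². -/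
open RealInnerProductSpace

/-!
With `S = ∑ i, Pᵢ u`, the projections being self-adjoint idempotents give
`∑ i, ‖Pᵢ u‖² = ⟪S, u⟫`. Applying the overlap bound to `wᵢ = Pᵢ u` yields
`‖S‖² ≤ Λ² ⟪S, u⟫ ≤ Λ² ‖S‖ ‖u‖`, so `‖S‖ ≤ Λ² ‖u‖`, and then
`∑ i, ‖Pᵢ u‖² = ⟪S, u⟫ ≤ ‖S‖ ‖u‖ ≤ Λ² ‖u‖²`.
-/

namespace Submodule

variable {V : Type*} [NormedAddCommGroup V] [InnerProductSpace ℝ V]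

theorem inner_sum_starProjection_self {ι : Type*} (s : Finset ι) (W : ι → Submodule ℝ V)
    [∀ i, (W i).HasOrthogonalProjection] (u : V) :
    ⟪∑ i ∈ s, (W i).starProjection u, u⟫ = ∑ i ∈ s, ‖(W i).starProjection u‖ ^ 2 := by
  simp only [sum_inner, real_inner_starProjection_self]

end Submodule

theorem norm_le_mul_norm_of_sq_le_mul_inner {V : Type*} [NormedAddCommGroup V]
    [InnerProductSpace ℝ V] {x u : V} {c : ℝ} (hc : 0 ≤ c) (h : ‖x‖ ^ 2 ≤ c * ⟪x, u⟫) : ‖x‖ ≤ c * ‖u‖ := by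
  rcases (norm_nonneg x).eq_or_lt with hx | hx
  · rw [← hx]; positivity
  refine le_of_mul_le_mul_left ?_ hx
  calc ‖x‖ * ‖x‖ = ‖x‖ ^ 2 := (sq _).symm
    _ ≤ c * ⟪x, u⟫ := h
    _ ≤ c * (‖x‖ * ‖u‖) := mul_le_mul_of_nonneg_left (real_inner_le_norm x u) hc
    _ = ‖x‖ * (c * ‖u‖) := by ring

theorem stmt_14_general {V : Type*} [NormedAddCommGroup V] [InnerProductSpace ℝ V]
    [FiniteDimensional ℝ V]
    {ι : Type*} [Fintype ι] (W : ι → Submodule ℝ V)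
    (Λ : ℝ)
    (hoverlap : ∀ w : ι → V, (∀ i, w i ∈ W i) →
      ‖∑ i, w i‖ ^ 2 ≤ Λ ^ 2 * ∑ i, ‖w i‖ ^ 2) :
    ∀ u : V, ‖∑ i, ((Submodule.orthogonalProjection (W i) u : V))‖ ≤ Λ ^ 2 * ‖u‖ ∧
      ∑ i, ‖(Submodule.orthogonalProjection (W i) u : V)‖ ^ 2 ≤ Λ ^ 2 * ‖u‖ ^ 2 := by
  intro u
  change ‖∑ i, (W i).starProjection u‖ ≤ Λ ^ 2 * ‖u‖ ∧
    ∑ i, ‖(W i).starProjection u‖ ^ 2 ≤ Λ ^ 2 * ‖u‖ ^ 2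
  set S := ∑ i, (W i).starProjection u
  have hS_inner : ⟪S, u⟫ = ∑ i, ‖(W i).starProjection u‖ ^ 2 :=
    Submodule.inner_sum_starProjection_self _ W u
  have hS : ‖S‖ ≤ Λ ^ 2 * ‖u‖ :=
    norm_le_mul_norm_of_sq_le_mul_inner (sq_nonneg Λ)
      (hS_inner ▸ hoverlap _ fun i => (W i).starProjection_apply_mem u)
  refine ⟨hS, ?_⟩
  calc ∑ i, ‖(W i).starProjection u‖ ^ 2 = ⟪S, u⟫ := hS_inner.symm
    _ ≤ ‖S‖ * ‖u‖ := real_inner_le_norm S u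
    _ ≤ Λ ^ 2 * ‖u‖ * ‖u‖ := by gcongr
    _ = Λ ^ 2 * ‖u‖ ^ 2 := by ring

/-- Let `V` be a finite-dimensional real inner product space, `(Wᵢ)` a finite family of
subspaces with orthogonal projections `Pᵢ`, with finite overlap constant `Λ > 0`, i.e.
`‖Σᵢ wᵢ‖² ≤ Λ²·Σᵢ ‖wᵢ‖²` whenever `wᵢ ∈ Wᵢ`.  Then for every `u ∈ V` one has
`‖Σᵢ Pᵢ u‖ ≤ Λ²·‖u‖` and `Σᵢ ‖Pᵢ u‖² ≤ Λ²·‖u‖²`. -/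
theorem stmt_14 {V : Type*} [NormedAddCommGroup V] [InnerProductSpace ℝ V]
    [FiniteDimensional ℝ V]
    {ι : Type*} [Fintype ι] (W : ι → Submodule ℝ V)
    (Λ : ℝ) (hΛ : 0 < Λ)
    (hoverlap : ∀ w : ι → V, (∀ i, w i ∈ W i) →
      ‖∑ i, w i‖ ^ 2 ≤ Λ ^ 2 * ∑ i, ‖w i‖ ^ 2) :
    ∀ u : V, ‖∑ i, ((Submodule.orthogonalProjection (W i) u : V))‖ ≤ Λ ^ 2 * ‖u‖ ∧
      ∑ i, ‖(Submodule.orthogonalProjection (W i) u : V)‖ ^ 2 ≤ Λ ^ 2 * ‖u‖ ^ 2 :=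
  stmt_14_general W Λ hoverlap
end

section
/- Let u ∈ V and let t ∈ V₀ satisfy the Galerkin orthogonality b(u − t, z) = 0 for all z ∈ V₀. Suppose there is δ ≥ 0 with ‖u − t‖ ≤ δ·‖u − t‖_{1,k} and 2kδ ≤ 1/2. Then ‖u − t‖_{1,k} ≤ 2‖u‖_{1,k}. -/
open RealInnerProductSpace

lemma cs_psd {V : Type*} [NormedAddCommGroup V] [InnerProductSpace ℝ V]
    (a : V →ₗ[ℝ] V →ₗ[ℝ] ℝ)
    (ha_symm : ∀ x y : V, a x y = a y x) (ha_psd : ∀ x : V, 0 ≤ a x x)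
    (x y : V) : (a x y) ^ 2 ≤ a x x * a y y := by
  rcases (ha_psd y).eq_or_lt with h0 | hpos
  · by_cases hxy : a x y = 0
    · rw [hxy]
      simpa using mul_nonneg (ha_psd x) (ha_psd y)
    · exfalso
      have h := ha_psd (x - ((a x x + 1) / (2 * a x y)) • y)
      simp only [map_sub, map_smul, LinearMap.sub_apply, LinearMap.smul_apply,
        smul_eq_mul] at h
      rw [ha_symm y x, ← h0] at h
      have hc : ((a x x + 1) / (2 * a x y)) * a x y = (a x x + 1) / 2 := by
        field_simp
      nlinarith [h, hc]
  · have h1 := ha_psd (a y y • x - a x y • y)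
    simp only [map_sub, map_smul, LinearMap.sub_apply, LinearMap.smul_apply,
      smul_eq_mul] at h1
    rw [ha_symm y x] at h1
    nlinarith [h1, hpos]

set_option maxHeartbeats 1000000 in
/-- Let `V` be a finite-dimensional real inner product space, `a` a symmetric positive
semidefinite bilinear form, `k > 0`, with `(u,v)_{1,k} := a(u,v) + k²(u,v)`,
`‖u‖_{1,k} := √(a(u,u) + k²‖u‖²)` and `b(u,v) := a(u,v) - k²(u,v)`.  Let `V₀` be a
subspace, `u ∈ V`, and `t ∈ V₀` with the Galerkin orthogonality `b(u - t, z) = 0` for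
all `z ∈ V₀`.  If `δ ≥ 0` satisfies `‖u - t‖ ≤ δ·‖u - t‖_{1,k}` and `2kδ ≤ 1/2`, then
`‖u - t‖_{1,k} ≤ 2‖u‖_{1,k}`. -/
theorem stmt_15 {V : Type*} [NormedAddCommGroup V] [InnerProductSpace ℝ V]
    [FiniteDimensional ℝ V]
    (a : V →ₗ[ℝ] V →ₗ[ℝ] ℝ)
    (ha_symm : ∀ x y : V, a x y = a y x) (ha_psd : ∀ x : V, 0 ≤ a x x)
    (k : ℝ) (hk : 0 < k)
    (V₀ : Submodule ℝ V) (u t : V) (ht : t ∈ V₀)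
    (hGalerkin : ∀ z ∈ V₀, a (u - t) z - k ^ 2 * ⟪u - t, z⟫ = 0)
    (δ : ℝ) (hδ : 0 ≤ δ)
    (hbound : ‖u - t‖ ≤ δ * Real.sqrt (a (u - t) (u - t) + k ^ 2 * ‖u - t‖ ^ 2))
    (hsmall : 2 * k * δ ≤ 1 / 2) :
    Real.sqrt (a (u - t) (u - t) + k ^ 2 * ‖u - t‖ ^ 2) ≤
      2 * Real.sqrt (a u u + k ^ 2 * ‖u‖ ^ 2) := by
  set e : V := u - t with he
  have hae : 0 ≤ a e e := ha_psd e
  have hau : 0 ≤ a u u := ha_psd u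
  have hE : 0 ≤ a e e + k ^ 2 * ‖e‖ ^ 2 := by positivity
  have hU : 0 ≤ a u u + k ^ 2 * ‖u‖ ^ 2 := by positivity
  set N : ℝ := Real.sqrt (a e e + k ^ 2 * ‖e‖ ^ 2) with hN
  set M : ℝ := Real.sqrt (a u u + k ^ 2 * ‖u‖ ^ 2) with hM
  have hN0 : 0 ≤ N := Real.sqrt_nonneg _
  have hM0 : 0 ≤ M := Real.sqrt_nonneg _
  have hNsq : N ^ 2 = a e e + k ^ 2 * ‖e‖ ^ 2 := Real.sq_sqrt hE
  have hMsq : M ^ 2 = a u u + k ^ 2 * ‖u‖ ^ 2 := Real.sq_sqrt hU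
  -- key identity from Galerkin orthogonality
  have hG := hGalerkin t ht
  have hsplit : a e e = a e u - a e t := by
    have h : a e (u - t) = a e u - a e t := map_sub (a e) u t
    rw [← he] at h; exact h
  have hin : ⟪e, t⟫ = ⟪e, u⟫ - ‖e‖ ^ 2 := by
    have h : ⟪e, u - t⟫ = ⟪e, u⟫ - ⟪e, t⟫ := inner_sub_right e u t
    rw [← he, real_inner_self_eq_norm_sq] at h
    linarith
  have key : a e e + k ^ 2 * ‖e‖ ^ 2
      = (a e u - k ^ 2 * ⟪e, u⟫) + 2 * k ^ 2 * ‖e‖ ^ 2 := by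
    have hG' : a e t = k ^ 2 * ⟪e, t⟫ := by linarith
    rw [hsplit, hG', hin]; ring
  -- Cauchy-Schwarz pieces
  have cs1 : (a e u) ^ 2 ≤ a e e * a u u := cs_psd a ha_symm ha_psd e u
  have hinn : |⟪e, u⟫| ≤ ‖e‖ * ‖u‖ := abs_real_inner_le_norm e u
  set p : ℝ := Real.sqrt (a e e) with hp'
  set q : ℝ := Real.sqrt (a u u) with hq'
  have hp : p ^ 2 = a e e := Real.sq_sqrt hae
  have hq : q ^ 2 = a u u := Real.sq_sqrt hau
  have hp0 : 0 ≤ p := Real.sqrt_nonneg _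
  have hq0 : 0 ≤ q := Real.sqrt_nonneg _
  -- b(e,u) ≤ N * M
  have hb : a e u - k ^ 2 * ⟪e, u⟫ ≤ N * M := by
    have h1 : a e u ≤ p * q := by
      calc a e u ≤ |a e u| := le_abs_self _
        _ = Real.sqrt ((a e u) ^ 2) := (Real.sqrt_sq_eq_abs _).symm
        _ ≤ Real.sqrt (a e e * a u u) := Real.sqrt_le_sqrt cs1
        _ = p * q := Real.sqrt_mul hae _
    have h2 : -(k ^ 2 * ⟪e, u⟫) ≤ (k * ‖e‖) * (k * ‖u‖) := by
      have h := (abs_le.mp hinn).1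
      nlinarith [sq_nonneg k]
    have h3 : p * q + (k * ‖e‖) * (k * ‖u‖) ≤ N * M := by
      have hNM : N * M = Real.sqrt ((a e e + k ^ 2 * ‖e‖ ^ 2) *
          (a u u + k ^ 2 * ‖u‖ ^ 2)) := (Real.sqrt_mul hE _).symm
      have hr : (k * ‖e‖) ^ 2 = k ^ 2 * ‖e‖ ^ 2 := by ring
      have hs : (k * ‖u‖) ^ 2 = k ^ 2 * ‖u‖ ^ 2 := by ring
      rw [hNM, ← hp, ← hq, ← hr, ← hs]
      apply Real.le_sqrt_of_sq_le
      nlinarith [sq_nonneg (p * (k * ‖u‖) - (k * ‖e‖) * q)]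
    linarith
  -- small term bound
  have hke : k * ‖e‖ ≤ N := by
    apply Real.le_sqrt_of_sq_le
    nlinarith [hae]
  have hbe : ‖e‖ ≤ δ * N := hbound
  have h2 : 2 * k ^ 2 * ‖e‖ ^ 2 ≤ (1 / 2) * N ^ 2 := by
    have hmul : ‖e‖ * (k * ‖e‖) ≤ (δ * N) * N :=
      mul_le_mul hbe hke (by positivity) (mul_nonneg hδ hN0)
    nlinarith [hk.le, hsmall, sq_nonneg N, mul_nonneg hδ hN0]
  -- conclude
  have hfin : N ^ 2 ≤ N * M + (1 / 2) * N ^ 2 := by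
    rw [hNsq, key]; linarith
  rcases hN0.eq_or_lt with h0 | hNpos
  · rw [← h0]; positivity
  · nlinarith [hfin, hNpos, hM0]
end
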